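/- arXiv:1603.06211 — 3 statements merged into one kernel-verified Lean document; each statement's English description precedes it below -/
import Mathlib

section
/- Let H and N be connected Lie groups with N abelian, and let φ: H → Aut(N) be a non-trivial group homomorphism. Then the semidirect product H ⋉_φ N admits no bi-invariant Riemannian metric. -/
/-- Let H and N be connected Lie groups with N abelian, and let
φ : H → Aut(N) be a non-trivial homomorphism.  At the Lie algebra level, the
semidirect product H ⋉_φ N has Lie algebra 𝔥 ⊕ 𝔫 with bracket
[(A,u),(B,v)] = ([A,B], φ_*(A)v − φ_*(B)u), and a left-invariant metric
(= a positive definite inner product B on 𝔥 ⊕ 𝔫) is bi-invariant iff every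
ad X is skew-symmetric with respect to B.  The statement: no such inner
product can make all ad X skew-symmetric, i.e. H ⋉_φ N admits no bi-invariant
Riemannian metric. -/
theorem tangent_lie_stmt0
    (H N : Type*) [LieRing H] [LieAlgebra ℝ H] [AddCommGroup N] [Module ℝ N]
    (φ : H →ₗ[ℝ] Module.End ℝ N)
    (hφhom : ∀ A B : H, φ ⁅A, B⁆ = φ A * φ B - φ B * φ A)
    (hφnontriv : ∃ (A : H) (u : N), φ A u ≠ 0)
    (bracket : (H × N) → (H × N) → (H × N))
    (hbracket : ∀ X Y : H × N,
      bracket X Y = (⁅X.1, Y.1⁆, φ X.1 Y.2 - φ Y.1 X.2))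
    (B : (H × N) →ₗ[ℝ] (H × N) →ₗ[ℝ] ℝ)
    (hBsymm : ∀ X Y, B X Y = B Y X)
    (hBpos : ∀ X, X ≠ 0 → 0 < B X X) :
    ¬ (∀ X Y Z : H × N, B (bracket X Y) Z = - B Y (bracket X Z)) := by
  intro h
  obtain ⟨A, u, hw⟩ := hφnontriv
  set w := φ A u with hwdef
  have h1 := h (0, u) (A, 0) (0, w)
  rw [hbracket, hbracket] at h1
  simp only [Prod.fst, Prod.snd] at h1
  have hz : (φ (0 : H)) = 0 := map_zero φ
  simp only [zero_lie, hz, LinearMap.zero_apply, map_zero, zero_sub, sub_zero, sub_self,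
    lie_self] at h1
  -- h1 : B (0, -w) (0, w) = -B (A, 0) (0, 0)
  have h2 : B ((0 : H), -w) ((0 : H), w) = 0 := by
    rw [h1]
    have : ((0 : H), (0 : N)) = (0 : H × N) := rfl
    rw [this, map_zero]
    simp
  have h3 : B ((0 : H), w) ((0 : H), w) = 0 := by
    have : ((0 : H), -w) = -((0 : H), w) := by simp [Prod.ext_iff]
    rw [this, map_neg] at h2
    simpa using h2
  have h4 : ((0 : H), w) ≠ (0 : H × N) := by
    simp [Prod.ext_iff, hw]
  exact absurd h3 (ne_of_gt (hBpos _ h4))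
end

section
/- Let 𝔤 be a Lie algebra. On the set 𝔤 ⊕ 𝔤 consider the two bracket structures: the semidirect product bracket [(A,u),(B,v)]_s = ([A,B],[A,v]−[B,u]) and the direct product bracket with respect to the decomposition spanned by x_i = (a e_i, 0), y_i = (b e_i, e_i): [(X,Y),(X',Y')]_d with relations [x_i,x_j]_d = aΣC_{ij}^k x_k, [x_i,y_j]_d = bΣC_{ij}^k x_k, [y_i,y_j]_d = (b²/a)ΣC_{ij}^k x_k. If 𝔤 is non-abelian and b ≠ 0, then these two Lie algebra structures are not isomorphic via any map fixing the inner product making {x_i, y_i} orthonormal and mapping the derived algebra compatibly; more precisely, in the semidirect product the span of the y_i is not contained in the centralizer of the derived algebra, while all brackets in the direct product structure lie in the span of the x_i. -/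
open scoped BigOperators

/-- On the set 𝔤 ⊕ 𝔤 consider the semidirect product bracket
[(A,u),(B,v)]_s = ([A,B],[A,v]−[B,u]) and the direct product bracket
[(X,Y),(X',Y')]_d = ([X,X'],[Y,Y']) (which in the basis x_i = (a e_i,0),
y_i = (b e_i,e_i) has relations [x_i,x_j]_d = aΣC x_k, [x_i,y_j]_d = bΣC x_k,
[y_i,y_j]_d = (b²/a)ΣC x_k).  If 𝔤 is non-abelian and b ≠ 0, then in the
semidirect structure the span of the y_i is not contained in the centralizer
of the derived algebra, whereas all direct-product brackets lie in the span
of the x_i — so the two structures are distinguishable. -/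
theorem tangent_lie_stmt10
    (𝔤 : Type*) [LieRing 𝔤] [LieAlgebra ℝ 𝔤] (n : ℕ)
    (e : Fin n → 𝔤) (hindep : LinearIndependent ℝ e)
    (hspan : Submodule.span ℝ (Set.range e) = ⊤)
    (C : Fin n → Fin n → Fin n → ℝ)
    (hstruct : ∀ i j, ⁅e i, e j⁆ = ∑ k, C i j k • e k)
    (hanti1 : ∀ i j k, C i j k = - C j i k)
    (hanti2 : ∀ i j k, C i j k = - C i k j)
    (a b : ℝ) (ha : a ≠ 0) (hb : b ≠ 0)
    (hnonab : ∃ A B : 𝔤, ⁅A, B⁆ ≠ 0)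
    (brS brD : (𝔤 × 𝔤) → (𝔤 × 𝔤) → (𝔤 × 𝔤))
    (hbrS : ∀ X Y : 𝔤 × 𝔤, brS X Y = (⁅X.1, Y.1⁆, ⁅X.1, Y.2⁆ - ⁅Y.1, X.2⁆))
    (hbrD : ∀ X Y : 𝔤 × 𝔤, brD X Y = (⁅X.1, Y.1⁆, 0))
    (x y : Fin n → 𝔤 × 𝔤)
    (hx : ∀ i, x i = a • ((e i, 0) : 𝔤 × 𝔤))
    (hy : ∀ i, y i = ((b • e i, e i) : 𝔤 × 𝔤)) :
    (¬ ∀ (i : Fin n) (Z : 𝔤 × 𝔤), (∃ U V : 𝔤 × 𝔤, Z = brS U V) →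
        brS (y i) Z = 0) ∧
    (∀ U V : 𝔤 × 𝔤, brD U V ∈ Submodule.span ℝ (Set.range x)) := by
  -- Step 0: there are i j k with C i j k ≠ 0 (since 𝔤 nonabelian)
  have hEx : ∃ i j k, C i j k ≠ 0 := by
    by_contra h
    push_neg at h
    have hee : ∀ i j, ⁅e i, e j⁆ = 0 := by
      intro i j
      rw [hstruct]
      simp [h]
    have step1 : ∀ (i : Fin n) (Y : 𝔤), ⁅e i, Y⁆ = 0 := by
      intro i Y
      have hle : Submodule.span ℝ (Set.range e) ≤
          LinearMap.ker (LieAlgebra.ad ℝ 𝔤 (e i)) := by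
        rw [Submodule.span_le]
        rintro _ ⟨j, rfl⟩
        simp [LinearMap.mem_ker, LieAlgebra.ad_apply, hee i j]
      have hY : Y ∈ LinearMap.ker (LieAlgebra.ad ℝ 𝔤 (e i)) :=
        hle (hspan ▸ Submodule.mem_top)
      simpa [LinearMap.mem_ker, LieAlgebra.ad_apply] using hY
    have step2 : ∀ X Y : 𝔤, ⁅X, Y⁆ = 0 := by
      intro X Y
      have hle : Submodule.span ℝ (Set.range e) ≤
          LinearMap.ker (LieAlgebra.ad ℝ 𝔤 Y) := by
        rw [Submodule.span_le]
        rintro _ ⟨j, rfl⟩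
        have : ⁅Y, e j⁆ = 0 := by
          have h1 := step1 j Y
          rw [← lie_skew] at h1
          exact neg_eq_zero.mp h1
        simp [LinearMap.mem_ker, LieAlgebra.ad_apply, this]
      have hX : X ∈ LinearMap.ker (LieAlgebra.ad ℝ 𝔤 Y) :=
        hle (hspan ▸ Submodule.mem_top)
      have hYX : ⁅Y, X⁆ = 0 := by
        simpa [LinearMap.mem_ker, LieAlgebra.ad_apply] using hX
      rw [← lie_skew, hYX, neg_zero]
    obtain ⟨A, B, hAB⟩ := hnonab
    exact hAB (step2 A B)
  obtain ⟨i, j, k0, hk0⟩ := hEx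
  constructor
  · -- the semidirect structure fails the centralizer property
    intro hall
    have hZ := hall i (brS ((e i, (0:𝔤)) : 𝔤 × 𝔤) (((0:𝔤), e j) : 𝔤 × 𝔤))
      ⟨_, _, rfl⟩
    rw [hbrS, hbrS, hy] at hZ
    simp only [Prod.fst, Prod.snd] at hZ
    have hZ2 : ⁅b • e i, ⁅e i, e j⁆ - ⁅(0:𝔤), (0:𝔤)⁆⁆ - ⁅⁅e i, (0:𝔤)⁆, e i⁆ = 0 := by
      have := congrArg Prod.snd hZ
      simpa using this
    have hbr0 : ⁅e i, ⁅e i, e j⁆⁆ = 0 := by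
      simp only [zero_lie, lie_zero, sub_zero, smul_lie] at hZ2
      exact (smul_eq_zero.mp hZ2).resolve_left hb
    -- expand the double bracket in the basis
    have adsum : ∀ (Z : 𝔤) (f : Fin n → 𝔤), ⁅Z, ∑ m, f m⁆ = ∑ m, ⁅Z, f m⁆ := by
      intro Z f
      have h := map_sum (LieAlgebra.ad ℝ 𝔤 Z) f Finset.univ
      simp only [LieAlgebra.ad_apply] at h
      exact h
    have hexp : ⁅e i, ⁅e i, e j⁆⁆ = ∑ l, (∑ m, C i j m * C i m l) • e l := by
      rw [hstruct, adsum]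
      have hterm : ∀ m, ⁅e i, C i j m • e m⁆ = ∑ l, (C i j m * C i m l) • e l := by
        intro m
        rw [lie_smul, hstruct, Finset.smul_sum]
        refine Finset.sum_congr rfl fun l _ => ?_
        rw [smul_smul]
      rw [Finset.sum_congr rfl fun m _ => hterm m, Finset.sum_comm]
      refine Finset.sum_congr rfl fun l _ => ?_
      rw [← Finset.sum_smul]
    have hcoeff : ∀ l, (∑ m, C i j m * C i m l) = 0 := by
      have h0 : ∑ l, (∑ m, C i j m * C i m l) • e l = 0 := by
        rw [← hexp, hbr0]
      exact Fintype.linearIndependent_iff.mp hindep _ h0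
    have hj := hcoeff j
    have hsq : ∑ m, C i j m * C i j m = 0 := by
      have hrw : ∀ m, C i j m * C i m j = -(C i j m * C i j m) := by
        intro m
        have h2 : C i m j = -C i j m := by linarith [hanti2 i j m]
        rw [h2]; ring
      have hsum : ∑ m, C i j m * C i m j = ∑ m, -(C i j m * C i j m) :=
        Finset.sum_congr rfl fun m _ => hrw m
      rw [Finset.sum_neg_distrib] at hsum
      linarith [hj, hsum]
    have := (Finset.sum_eq_zero_iff_of_nonneg
      (fun m _ => mul_self_nonneg (C i j m))).mp hsq k0 (Finset.mem_univ k0)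
    exact hk0 (by nlinarith [this])
  · -- all direct-product brackets lie in the span of the x_i
    intro U V
    rw [hbrD]
    have key : ∀ g : 𝔤, ((g, 0) : 𝔤 × 𝔤) ∈ Submodule.span ℝ (Set.range x) := by
      intro g
      have hg : (LinearMap.inl ℝ 𝔤 𝔤) g ∈
          Submodule.map (LinearMap.inl ℝ 𝔤 𝔤) (Submodule.span ℝ (Set.range e)) :=
        Submodule.mem_map_of_mem (hspan ▸ Submodule.mem_top)
      rw [Submodule.map_span] at hg
      refine Submodule.span_le.mpr ?_ hg
      rintro _ ⟨_, ⟨i', rfl⟩, rfl⟩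
      have hxe : ((e i', 0) : 𝔤 × 𝔤) = a⁻¹ • x i' := by
        rw [hx, smul_smul, inv_mul_cancel₀ ha, one_smul]
      simp only [LinearMap.inl_apply]
      rw [hxe]
      exact Submodule.smul_mem _ _ (Submodule.subset_span ⟨i', rfl⟩)
    exact key _
end

section
/- Let G be a compact connected Lie group with bi-invariant metric, with totally antisymmetric structure constants C_{ij}^k. On 𝔪 = 𝔤 ⋉_ad 𝔤 with orthonormal basis {x_i, y_i} as above (a, b ≠ 0), define the 3-form T = Σ_{i<j<k} C_{ij}^k [ (a + 2b²/a) x_{ijk} − 2b y_{ijk} + (b²/a)(x_i∧y_j∧y_k + y_i∧x_j∧y_k + y_i∧y_j∧x_k) ] and the endomorphism-valued map Λ(x_i) = (a + b²/a) H_i, Λ(y_i) = 0 with H_i = Σ_{j<k} C_{ij}^k(x_j∧x_k + y_j∧y_k). Then Λ(Z)·T = 0 for all Z ∈ 𝔪, where so(𝔪) acts on 3-forms as a derivation; i.e., T is parallel for the connection defined by Λ. -/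
open scoped BigOperators RealInnerProductSpace

/-- The elementary skew endomorphism u∧v, (u∧v)(w) = ⟨u,w⟩v − ⟨v,w⟩u. -/
noncomputable def elemWedge {V : Type*} [NormedAddCommGroup V]
    [InnerProductSpace ℝ V] (u v : V) : Module.End ℝ V :=
  ((innerSL ℝ u).smulRight v - (innerSL ℝ v).smulRight u).toLinearMap

/-- The 3-form u∧v∧w on an inner product space, evaluated via a 3×3 Gram
determinant: (u∧v∧w)(X,Y,Z) = det(⟨u,X⟩ …). -/
noncomputable def triWedge {V : Type*} [NormedAddCommGroup V]
    [InnerProductSpace ℝ V] (u v w X Y Z : V) : ℝ :=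
  Matrix.det !![⟪u, X⟫, ⟪u, Y⟫, ⟪u, Z⟫;
                ⟪v, X⟫, ⟪v, Y⟫, ⟪v, Z⟫;
                ⟪w, X⟫, ⟪w, Y⟫, ⟪w, Z⟫]

section Aux

variable {n : ℕ}

lemma tls17_pair_sym (g : Fin n → Fin n → ℝ) (hsym : ∀ j k, g j k = g k j)
    (hdiag : ∀ j, g j j = 0) :
    ∑ j, ∑ k, g j k =
      2 * ∑ p ∈ Finset.univ.filter (fun p : Fin n × Fin n => p.1 < p.2), g p.1 p.2 := by
  have h1 : ∑ j, ∑ k, g j k = ∑ p : Fin n × Fin n, g p.1 p.2 :=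
    (Fintype.sum_prod_type (f := fun p : Fin n × Fin n => g p.1 p.2)).symm
  rw [h1, ← Finset.sum_filter_add_sum_filter_not Finset.univ (fun p : Fin n × Fin n => p.1 < p.2)]
  have h2 : ∑ p ∈ Finset.univ.filter (fun p : Fin n × Fin n => ¬ p.1 < p.2), g p.1 p.2
      = ∑ p ∈ Finset.univ.filter (fun p : Fin n × Fin n => p.1 < p.2), g p.1 p.2 := by
    rw [← Finset.sum_filter_add_sum_filter_not
      (Finset.univ.filter (fun p : Fin n × Fin n => ¬ p.1 < p.2)) (fun p => p.2 < p.1)]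
    have hz : ∑ p ∈ (Finset.univ.filter (fun p : Fin n × Fin n => ¬ p.1 < p.2)).filter
        (fun p => ¬ p.2 < p.1), g p.1 p.2 = 0 := by
      apply Finset.sum_eq_zero
      intro p hp
      simp only [Finset.mem_filter] at hp
      have : p.1 = p.2 := le_antisymm (not_lt.1 hp.2) (not_lt.1 hp.1.2)
      rw [this, hdiag]
    rw [hz, add_zero]
    apply Finset.sum_nbij' (i := fun p => Prod.swap p) (j := fun p => Prod.swap p)
    · intro p hp; simp only [Finset.mem_filter] at hp ⊢; exact ⟨Finset.mem_univ _, hp.2⟩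
    · intro p hp; simp only [Finset.mem_filter] at hp ⊢
      exact ⟨⟨Finset.mem_univ _, not_lt.2 hp.2.le⟩, hp.2⟩
    · intro p _; rfl
    · intro p _; rfl
    · intro p _; exact hsym p.1 p.2
  rw [h2]; ring

lemma tls17_s213 (F : Fin n → Fin n → Fin n → ℝ) :
    ∑ i, ∑ j, ∑ k, F i j k = ∑ i, ∑ j, ∑ k, F j i k := Finset.sum_comm

lemma tls17_s132 (F : Fin n → Fin n → Fin n → ℝ) :
    ∑ i, ∑ j, ∑ k, F i j k = ∑ i, ∑ j, ∑ k, F i k j :=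
  Finset.sum_congr rfl fun _ _ => Finset.sum_comm

lemma tls17_s312 (F : Fin n → Fin n → Fin n → ℝ) :
    ∑ i, ∑ j, ∑ k, F i j k = ∑ i, ∑ j, ∑ k, F k i j :=
  (tls17_s213 F).trans (tls17_s132 fun i j k => F j i k)

lemma tls17_s231 (F : Fin n → Fin n → Fin n → ℝ) :
    ∑ i, ∑ j, ∑ k, F i j k = ∑ i, ∑ j, ∑ k, F j k i :=
  (tls17_s132 F).trans (tls17_s213 fun i j k => F i k j)

lemma tls17_s321 (F : Fin n → Fin n → Fin n → ℝ) :
    ∑ i, ∑ j, ∑ k, F i j k = ∑ i, ∑ j, ∑ k, F k j i :=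
  (tls17_s213 F).trans (tls17_s231 fun i j k => F j i k)

lemma tls17_six_sym (h : Fin n → Fin n → Fin n → ℝ)
    (h12 : ∀ i j k, h i j k = h j i k) (h23 : ∀ i j k, h i j k = h i k j)
    (d12 : ∀ i k, h i i k = 0) (d23 : ∀ i j, h i j j = 0) :
    ∑ i, ∑ j, ∑ k, h i j k =
      6 * ∑ p ∈ Finset.univ.filter
        (fun p : Fin n × Fin n × Fin n => p.1 < p.2.1 ∧ p.2.1 < p.2.2),
        h p.1 p.2.1 p.2.2 := by
  have d13 : ∀ i j, h i j i = 0 := fun i j => (h23 i j i).trans (d12 i j)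
  have hcan : ∑ p ∈ Finset.univ.filter
      (fun p : Fin n × Fin n × Fin n => p.1 < p.2.1 ∧ p.2.1 < p.2.2),
      h p.1 p.2.1 p.2.2
      = ∑ i, ∑ j, ∑ k, (if i < j ∧ j < k then h i j k else 0) := by
    rw [Finset.sum_filter]
    rw [Fintype.sum_prod_type (f := fun p : Fin n × Fin n × Fin n =>
      if p.1 < p.2.1 ∧ p.2.1 < p.2.2 then h p.1 p.2.1 p.2.2 else 0)]
    exact Finset.sum_congr rfl fun i _ =>
      Fintype.sum_prod_type (f := fun p : Fin n × Fin n =>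
        if i < p.1 ∧ p.1 < p.2 then h i p.1 p.2 else 0)
  have point : ∀ i j k, h i j k =
      (if i < j ∧ j < k then h i j k else 0)
      + (if j < i ∧ i < k then h i j k else 0)
      + (if j < k ∧ k < i then h i j k else 0)
      + (if i < k ∧ k < j then h i j k else 0)
      + (if k < i ∧ i < j then h i j k else 0)
      + (if k < j ∧ j < i then h i j k else 0) := by
    intro i j k
    rcases lt_trichotomy i j with hij | hij | hij <;>
      rcases lt_trichotomy j k with hjk | hjk | hjk <;>
      rcases lt_trichotomy i k with hik | hik | hik <;>
      first
        | (subst hij; simp_all [d12])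
        | (subst hjk; simp_all [d23])
        | (subst hik; simp_all [d13])
        | (simp_all [lt_asymm, lt_irrefl]; try omega)
  calc ∑ i, ∑ j, ∑ k, h i j k
      = ∑ i, ∑ j, ∑ k, ((if i < j ∧ j < k then h i j k else 0)
        + (if j < i ∧ i < k then h i j k else 0)
        + (if j < k ∧ k < i then h i j k else 0)
        + (if i < k ∧ k < j then h i j k else 0)
        + (if k < i ∧ i < j then h i j k else 0)
        + (if k < j ∧ j < i then h i j k else 0)) := by
        exact Finset.sum_congr rfl fun i _ => Finset.sum_congr rfl fun j _ =>
          Finset.sum_congr rfl fun k _ => point i j k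
    _ = (∑ i, ∑ j, ∑ k, (if i < j ∧ j < k then h i j k else 0))
        + (∑ i, ∑ j, ∑ k, (if j < i ∧ i < k then h i j k else 0))
        + (∑ i, ∑ j, ∑ k, (if j < k ∧ k < i then h i j k else 0))
        + (∑ i, ∑ j, ∑ k, (if i < k ∧ k < j then h i j k else 0))
        + (∑ i, ∑ j, ∑ k, (if k < i ∧ i < j then h i j k else 0))
        + (∑ i, ∑ j, ∑ k, (if k < j ∧ j < i then h i j k else 0)) := by
        simp only [Finset.sum_add_distrib]
    _ = 6 * ∑ p ∈ Finset.univ.filter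
        (fun p : Fin n × Fin n × Fin n => p.1 < p.2.1 ∧ p.2.1 < p.2.2),
        h p.1 p.2.1 p.2.2 := by
        rw [hcan]
        have e2 : (∑ i, ∑ j, ∑ k, (if j < i ∧ i < k then h i j k else 0))
            = ∑ i, ∑ j, ∑ k, (if i < j ∧ j < k then h i j k else 0) := by
          rw [tls17_s213 (fun i j k => if j < i ∧ i < k then h i j k else 0)]
          exact Finset.sum_congr rfl fun i _ => Finset.sum_congr rfl fun j _ =>
            Finset.sum_congr rfl fun k _ => by rw [h12 j i k]
        have e3 : (∑ i, ∑ j, ∑ k, (if j < k ∧ k < i then h i j k else 0))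
            = ∑ i, ∑ j, ∑ k, (if i < j ∧ j < k then h i j k else 0) := by
          rw [tls17_s312 (fun i j k => if j < k ∧ k < i then h i j k else 0)]
          exact Finset.sum_congr rfl fun i _ => Finset.sum_congr rfl fun j _ =>
            Finset.sum_congr rfl fun k _ => by rw [h12 k i j, h23 i k j]
        have e4 : (∑ i, ∑ j, ∑ k, (if i < k ∧ k < j then h i j k else 0))
            = ∑ i, ∑ j, ∑ k, (if i < j ∧ j < k then h i j k else 0) := by
          rw [tls17_s132 (fun i j k => if i < k ∧ k < j then h i j k else 0)]
          exact Finset.sum_congr rfl fun i _ => Finset.sum_congr rfl fun j _ =>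
            Finset.sum_congr rfl fun k _ => by rw [h23 i k j]
        have e5 : (∑ i, ∑ j, ∑ k, (if k < i ∧ i < j then h i j k else 0))
            = ∑ i, ∑ j, ∑ k, (if i < j ∧ j < k then h i j k else 0) := by
          rw [tls17_s231 (fun i j k => if k < i ∧ i < j then h i j k else 0)]
          exact Finset.sum_congr rfl fun i _ => Finset.sum_congr rfl fun j _ =>
            Finset.sum_congr rfl fun k _ => by rw [h23 j k i, h12 j i k]
        have e6 : (∑ i, ∑ j, ∑ k, (if k < j ∧ j < i then h i j k else 0))
            = ∑ i, ∑ j, ∑ k, (if i < j ∧ j < k then h i j k else 0) := by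
          rw [tls17_s321 (fun i j k => if k < j ∧ j < i then h i j k else 0)]
          exact Finset.sum_congr rfl fun i _ => Finset.sum_congr rfl fun j _ =>
            Finset.sum_congr rfl fun k _ => by rw [h12 k j i, h23 j k i, h12 j i k]
        rw [e2, e3, e4, e5, e6]; ring

lemma tls17_s4_swap34 (F : Fin n → Fin n → Fin n → Fin n → ℝ) :
    ∑ a, ∑ b, ∑ c, ∑ d, F a b c d = ∑ a, ∑ b, ∑ c, ∑ d, F a b d c :=
  Finset.sum_congr rfl fun a _ => Finset.sum_congr rfl fun b _ => Finset.sum_comm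

lemma tls17_s4_swap24 (F : Fin n → Fin n → Fin n → Fin n → ℝ) :
    ∑ a, ∑ b, ∑ c, ∑ d, F a b c d = ∑ a, ∑ b, ∑ c, ∑ d, F a d c b :=
  Finset.sum_congr rfl fun a _ => tls17_s321 (fun b c d => F a b c d)

lemma tls17_s4_swap14 (F : Fin n → Fin n → Fin n → Fin n → ℝ) :
    ∑ a, ∑ b, ∑ c, ∑ d, F a b c d = ∑ a, ∑ b, ∑ c, ∑ d, F d b c a := by
  calc ∑ a, ∑ b, ∑ c, ∑ d, F a b c d
      = ∑ b, ∑ a, ∑ c, ∑ d, F a b c d := Finset.sum_comm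
    _ = ∑ b, ∑ a, ∑ c, ∑ d, F d b c a :=
        Finset.sum_congr rfl fun b _ => tls17_s321 (fun a c d => F a b c d)
    _ = ∑ a, ∑ b, ∑ c, ∑ d, F d b c a := Finset.sum_comm

lemma tls17_core (C : Fin n → Fin n → Fin n → ℝ)
    (hanti1 : ∀ i j k, C i j k = - C j i k)
    (hanti2 : ∀ i j k, C i j k = - C i k j)
    (hjacobi : ∀ i j k l,
      (∑ m, (C i j m * C m k l + C j k m * C m i l + C k i m * C m j l)) = 0)
    (i : Fin n) (f g h : Fin n → ℝ) :
    ∑ j, ∑ k, ∑ l, C j k l *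
      ((∑ m, C i m j * f m) * g k * h l
       + f j * (∑ m, C i m k * g m) * h l
       + f j * g k * (∑ m, C i m l * h m)) = 0 := by
  have pw : ∀ j k l, C j k l *
      ((∑ m, C i m j * f m) * g k * h l
       + f j * (∑ m, C i m k * g m) * h l
       + f j * g k * (∑ m, C i m l * h m))
      = (∑ m, f m * g k * h l * (C j k l * C i m j))
        + (∑ m, f j * g m * h l * (C j k l * C i m k))
        + (∑ m, f j * g k * h m * (C j k l * C i m l)) := by
    intro j k l
    rw [mul_add, mul_add]
    congr 1
    · congr 1
      · simp only [Finset.sum_mul, Finset.mul_sum]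
        exact Finset.sum_congr rfl fun m _ => by ring
      · simp only [Finset.sum_mul, Finset.mul_sum]
        exact Finset.sum_congr rfl fun m _ => by ring
    · simp only [Finset.sum_mul, Finset.mul_sum]
      exact Finset.sum_congr rfl fun m _ => by ring
  calc ∑ j, ∑ k, ∑ l, C j k l *
      ((∑ m, C i m j * f m) * g k * h l
       + f j * (∑ m, C i m k * g m) * h l
       + f j * g k * (∑ m, C i m l * h m))
      = ∑ j, ∑ k, ∑ l, ((∑ m, f m * g k * h l * (C j k l * C i m j))
        + (∑ m, f j * g m * h l * (C j k l * C i m k))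
        + (∑ m, f j * g k * h m * (C j k l * C i m l))) :=
        Finset.sum_congr rfl fun j _ => Finset.sum_congr rfl fun k _ =>
          Finset.sum_congr rfl fun l _ => pw j k l
    _ = (∑ j, ∑ k, ∑ l, ∑ m, f m * g k * h l * (C j k l * C i m j))
        + (∑ j, ∑ k, ∑ l, ∑ m, f j * g m * h l * (C j k l * C i m k))
        + (∑ j, ∑ k, ∑ l, ∑ m, f j * g k * h m * (C j k l * C i m l)) := by
        simp only [Finset.sum_add_distrib]
    _ = (∑ p, ∑ q, ∑ r, ∑ m, f p * g q * h r * (C m q r * C i p m))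
        + (∑ p, ∑ q, ∑ r, ∑ m, f p * g q * h r * (C p m r * C i q m))
        + (∑ p, ∑ q, ∑ r, ∑ m, f p * g q * h r * (C p q m * C i r m)) := by
        rw [tls17_s4_swap14 (fun j k l m => f m * g k * h l * (C j k l * C i m j)),
            tls17_s4_swap24 (fun j k l m => f j * g m * h l * (C j k l * C i m k)),
            tls17_s4_swap34 (fun j k l m => f j * g k * h m * (C j k l * C i m l))]
    _ = ∑ p, ∑ q, ∑ r, (∑ m, (f p * g q * h r * (C m q r * C i p m)
        + f p * g q * h r * (C p m r * C i q m)
        + f p * g q * h r * (C p q m * C i r m))) := by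
        simp only [Finset.sum_add_distrib]
    _ = 0 := by
        apply Finset.sum_eq_zero; intro p _
        apply Finset.sum_eq_zero; intro q _
        apply Finset.sum_eq_zero; intro r _
        have hj := hjacobi i p q r
        calc ∑ m, (f p * g q * h r * (C m q r * C i p m)
              + f p * g q * h r * (C p m r * C i q m)
              + f p * g q * h r * (C p q m * C i r m))
            = f p * g q * h r * ∑ m, (C i p m * C m q r + C p q m * C m i r
                + C q i m * C m p r) := by
              rw [Finset.mul_sum]
              refine Finset.sum_congr rfl fun m _ => ?_
              have e1 : C p m r = - C m p r := hanti1 p m r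
              have e2 : C i q m = - C q i m := hanti1 i q m
              have e3 : C m i r = C i r m := by rw [hanti1 m i r, hanti2 i m r]; ring
              rw [e1, e2, ← e3]; ring
          _ = 0 := by rw [hj, mul_zero]

lemma tls17_det_inv (C : Fin n → Fin n → Fin n → ℝ)
    (hanti1 : ∀ i j k, C i j k = - C j i k)
    (hanti2 : ∀ i j k, C i j k = - C i k j)
    (hjacobi : ∀ i j k l,
      (∑ m, (C i j m * C m k l + C j k m * C m i l + C k i m * C m j l)) = 0)
    (i : Fin n) (f1 f2 f3 g1 g2 g3 p1 p2 p3 : Fin n → ℝ) :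
    ∑ j, ∑ k, ∑ l, C j k l *
      (Matrix.det !![∑ m, C i m j * f1 m, g1 j, p1 j;
                     ∑ m, C i m k * f2 m, g2 k, p2 k;
                     ∑ m, C i m l * f3 m, g3 l, p3 l]
       + Matrix.det !![f1 j, ∑ m, C i m j * g1 m, p1 j;
                       f2 k, ∑ m, C i m k * g2 m, p2 k;
                       f3 l, ∑ m, C i m l * g3 m, p3 l]
       + Matrix.det !![f1 j, g1 j, ∑ m, C i m j * p1 m;
                       f2 k, g2 k, ∑ m, C i m k * p2 m;
                       f3 l, g3 l, ∑ m, C i m l * p3 m]) = 0 := by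
  have core := tls17_core C hanti1 hanti2 hjacobi
  have pw : ∀ j k l : Fin n, C j k l *
      (Matrix.det !![∑ m, C i m j * f1 m, g1 j, p1 j;
                     ∑ m, C i m k * f2 m, g2 k, p2 k;
                     ∑ m, C i m l * f3 m, g3 l, p3 l]
       + Matrix.det !![f1 j, ∑ m, C i m j * g1 m, p1 j;
                       f2 k, ∑ m, C i m k * g2 m, p2 k;
                       f3 l, ∑ m, C i m l * g3 m, p3 l]
       + Matrix.det !![f1 j, g1 j, ∑ m, C i m j * p1 m;
                       f2 k, g2 k, ∑ m, C i m k * p2 m;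
                       f3 l, g3 l, ∑ m, C i m l * p3 m])
      = (C j k l * ((∑ m, C i m j * f1 m) * g2 k * p3 l
          + f1 j * (∑ m, C i m k * g2 m) * p3 l
          + f1 j * g2 k * (∑ m, C i m l * p3 m))
        - C j k l * ((∑ m, C i m j * f1 m) * p2 k * g3 l
          + f1 j * (∑ m, C i m k * p2 m) * g3 l
          + f1 j * p2 k * (∑ m, C i m l * g3 m))
        - C j k l * ((∑ m, C i m j * g1 m) * f2 k * p3 l
          + g1 j * (∑ m, C i m k * f2 m) * p3 l
          + g1 j * f2 k * (∑ m, C i m l * p3 m))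
        + C j k l * ((∑ m, C i m j * g1 m) * p2 k * f3 l
          + g1 j * (∑ m, C i m k * p2 m) * f3 l
          + g1 j * p2 k * (∑ m, C i m l * f3 m))
        + C j k l * ((∑ m, C i m j * p1 m) * f2 k * g3 l
          + p1 j * (∑ m, C i m k * f2 m) * g3 l
          + p1 j * f2 k * (∑ m, C i m l * g3 m))
        - C j k l * ((∑ m, C i m j * p1 m) * g2 k * f3 l
          + p1 j * (∑ m, C i m k * g2 m) * f3 l
          + p1 j * g2 k * (∑ m, C i m l * f3 m))) := by
    intro j k l
    simp [Matrix.det_fin_three]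
    ring
  rw [Finset.sum_congr rfl fun j _ => Finset.sum_congr rfl fun k _ =>
    Finset.sum_congr rfl fun l _ => pw j k l]
  simp only [Finset.sum_add_distrib, Finset.sum_sub_distrib]
  rw [core i f1 g2 p3, core i f1 p2 g3, core i g1 f2 p3, core i g1 p2 f3,
    core i p1 f2 g3, core i p1 g2 f3]
  ring

end Aux

section BAux

variable {n : ℕ} {V : Type*} [NormedAddCommGroup V] [InnerProductSpace ℝ V]

/-- The coefficient bracket of the 3-form T. -/
noncomputable def Bform (x y : Fin n → V) (a b : ℝ) (j k l : Fin n) (X Y W : V) : ℝ :=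
  (a + 2 * b ^ 2 / a) * triWedge (x j) (x k) (x l) X Y W
    - 2 * b * triWedge (y j) (y k) (y l) X Y W
    + b ^ 2 / a *
      (triWedge (x j) (y k) (y l) X Y W
        + triWedge (y j) (x k) (y l) X Y W
        + triWedge (y j) (y k) (x l) X Y W)

lemma Bform_swap12 (x y : Fin n → V) (a b : ℝ) (j k l : Fin n) (X Y W : V) :
    Bform x y a b k j l X Y W = - Bform x y a b j k l X Y W := by
  simp [Bform, triWedge, Matrix.det_fin_three]; ring

lemma Bform_swap23 (x y : Fin n → V) (a b : ℝ) (j k l : Fin n) (X Y W : V) :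
    Bform x y a b j l k X Y W = - Bform x y a b j k l X Y W := by
  simp [Bform, triWedge, Matrix.det_fin_three]; ring

lemma triWedge_add1 (u v w X1 X2 Y Z : V) :
    triWedge u v w (X1 + X2) Y Z = triWedge u v w X1 Y Z + triWedge u v w X2 Y Z := by
  simp [triWedge, Matrix.det_fin_three, inner_add_right]; ring

lemma triWedge_smul1 (c : ℝ) (u v w X Y Z : V) :
    triWedge u v w (c • X) Y Z = c * triWedge u v w X Y Z := by
  simp [triWedge, Matrix.det_fin_three, real_inner_smul_right]; ring

lemma triWedge_add2 (u v w X Y1 Y2 Z : V) :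
    triWedge u v w X (Y1 + Y2) Z = triWedge u v w X Y1 Z + triWedge u v w X Y2 Z := by
  simp [triWedge, Matrix.det_fin_three, inner_add_right]; ring

lemma triWedge_smul2 (c : ℝ) (u v w X Y Z : V) :
    triWedge u v w X (c • Y) Z = c * triWedge u v w X Y Z := by
  simp [triWedge, Matrix.det_fin_three, real_inner_smul_right]; ring

lemma triWedge_add3 (u v w X Y Z1 Z2 : V) :
    triWedge u v w X Y (Z1 + Z2) = triWedge u v w X Y Z1 + triWedge u v w X Y Z2 := by
  simp [triWedge, Matrix.det_fin_three, inner_add_right]; ring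

lemma triWedge_smul3 (c : ℝ) (u v w X Y Z : V) :
    triWedge u v w X Y (c • Z) = c * triWedge u v w X Y Z := by
  simp [triWedge, Matrix.det_fin_three, real_inner_smul_right]; ring

end BAux

set_option maxHeartbeats 4000000 in
/-- On 𝔪 = 𝔤 ⋉_ad 𝔤 with orthonormal basis {x_i, y_i}
(a, b ≠ 0, totally antisymmetric structure constants C with Jacobi), let
T = Σ_{i<j<k} C_{ij}^k [ (a+2b²/a) x_{ijk} − 2b y_{ijk}
+ (b²/a)(x_i∧y_j∧y_k + y_i∧x_j∧y_k + y_i∧y_j∧x_k) ] and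
Λ(x_i) = (a+b²/a) H_i, Λ(y_i) = 0 with
H_i = Σ_{j<k} C_{ij}^k (x_j∧x_k + y_j∧y_k).  Then Λ(Z)·T = 0 for all Z ∈ 𝔪,
where a skew endomorphism A acts on a 3-form ω by
(A·ω)(X,Y,Z) = −ω(AX,Y,Z) − ω(X,AY,Z) − ω(X,Y,AZ); i.e. T is parallel for
the connection defined by Λ. -/
theorem tangent_lie_stmt17
    (n : ℕ) (V : Type*) [NormedAddCommGroup V] [InnerProductSpace ℝ V]
    (x y : Fin n → V)
    (horth : Orthonormal ℝ (Sum.elim x y))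
    (hspan : Submodule.span ℝ (Set.range x ∪ Set.range y) = ⊤)
    (C : Fin n → Fin n → Fin n → ℝ)
    (hanti1 : ∀ i j k, C i j k = - C j i k)
    (hanti2 : ∀ i j k, C i j k = - C i k j)
    (hjacobi : ∀ i j k l,
      (∑ m, (C i j m * C m k l + C j k m * C m i l + C k i m * C m j l)) = 0)
    (a b : ℝ) (ha : a ≠ 0) (hb : b ≠ 0)
    (T : V → V → V → ℝ)
    (hT : ∀ X Y Z, T X Y Z =
      ∑ p ∈ Finset.univ.filter
        (fun p : Fin n × Fin n × Fin n => p.1 < p.2.1 ∧ p.2.1 < p.2.2),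
        C p.1 p.2.1 p.2.2 *
          ((a + 2 * b ^ 2 / a) * triWedge (x p.1) (x p.2.1) (x p.2.2) X Y Z
            - 2 * b * triWedge (y p.1) (y p.2.1) (y p.2.2) X Y Z
            + b ^ 2 / a *
              (triWedge (x p.1) (y p.2.1) (y p.2.2) X Y Z
                + triWedge (y p.1) (x p.2.1) (y p.2.2) X Y Z
                + triWedge (y p.1) (y p.2.1) (x p.2.2) X Y Z)))
    (H : Fin n → Module.End ℝ V)
    (hH : ∀ i, H i =
      ∑ p ∈ Finset.univ.filter (fun p : Fin n × Fin n => p.1 < p.2),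
        C i p.1 p.2 • (elemWedge (x p.1) (x p.2) + elemWedge (y p.1) (y p.2)))
    (Λ : V →ₗ[ℝ] Module.End ℝ V)
    (hΛx : ∀ i, Λ (x i) = (a + b ^ 2 / a) • H i)
    (hΛy : ∀ i, Λ (y i) = 0) :
    ∀ Z X Y W : V,
      - T (Λ Z X) Y W - T X (Λ Z Y) W - T X Y (Λ Z W) = 0 := by
  -- orthonormality facts
  have horth' := orthonormal_iff_ite.mp horth
  have hxx : ∀ p q : Fin n, ⟪x p, x q⟫ = if p = q then (1:ℝ) else 0 := by
    intro p q; have := horth' (Sum.inl p) (Sum.inl q); simpa using this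
  have hxy : ∀ p q : Fin n, ⟪x p, y q⟫ = 0 := by
    intro p q; have := horth' (Sum.inl p) (Sum.inr q); simpa using this
  have hyx : ∀ p q : Fin n, ⟪y p, x q⟫ = 0 := by
    intro p q; have := horth' (Sum.inr p) (Sum.inl q); simpa using this
  have hyy : ∀ p q : Fin n, ⟪y p, y q⟫ = if p = q then (1:ℝ) else 0 := by
    intro p q; have := horth' (Sum.inr p) (Sum.inr q); simpa using this
  have hdiagC2 : ∀ i j, C i j j = 0 := by
    intro i j; have := hanti2 i j j; linarith
  have hdiagC1 : ∀ i j, C i i j = 0 := by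
    intro i j; have := hanti1 i i j; linarith
  -- the action of H i
  have happly : ∀ (i : Fin n) (w : V), H i w =
      ∑ p ∈ Finset.univ.filter (fun p : Fin n × Fin n => p.1 < p.2),
        C i p.1 p.2 • ((⟪x p.1, w⟫ • x p.2 - ⟪x p.2, w⟫ • x p.1)
          + (⟪y p.1, w⟫ • y p.2 - ⟪y p.2, w⟫ • y p.1)) := by
    intro i w
    rw [hH i, LinearMap.sum_apply]
    refine Finset.sum_congr rfl fun p _ => ?_
    simp [elemWedge, ContinuousLinearMap.smulRight_apply]
  have innerHx : ∀ (i : Fin n) (w : V) (p : Fin n),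
      ⟪x p, H i w⟫ = ∑ m, C i m p * ⟪x m, w⟫ := by
    intro i w p
    rw [happly i w, inner_sum]
    have step : ∀ q : Fin n × Fin n,
        ⟪x p, C i q.1 q.2 • ((⟪x q.1, w⟫ • x q.2 - ⟪x q.2, w⟫ • x q.1)
          + (⟪y q.1, w⟫ • y q.2 - ⟪y q.2, w⟫ • y q.1))⟫
        = C i q.1 q.2 * (⟪x q.1, w⟫ * (if q.2 = p then 1 else 0)
            - ⟪x q.2, w⟫ * (if q.1 = p then 1 else 0)) := by
      intro q
      rw [real_inner_smul_right]
      congr 1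
      rw [inner_add_right, inner_sub_right, inner_sub_right,
        real_inner_smul_right, real_inner_smul_right,
        real_inner_smul_right, real_inner_smul_right,
        hxx, hxx, hxy, hxy]
      have e1 : (if p = q.2 then (1:ℝ) else 0) = (if q.2 = p then 1 else 0) := by
        by_cases h : p = q.2 <;> simp [h, eq_comm] at * <;> simp [*]
      have e2 : (if p = q.1 then (1:ℝ) else 0) = (if q.1 = p then 1 else 0) := by
        by_cases h : p = q.1 <;> simp [h, eq_comm] at * <;> simp [*]
      rw [e1, e2]; ring
    rw [Finset.sum_congr rfl fun q _ => step q]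
    have hsymg : ∀ j k : Fin n,
        C i j k * (⟪x j, w⟫ * (if k = p then 1 else 0)
          - ⟪x k, w⟫ * (if j = p then 1 else 0))
        = C i k j * (⟪x k, w⟫ * (if j = p then 1 else 0)
          - ⟪x j, w⟫ * (if k = p then 1 else 0)) := by
      intro j k; rw [hanti2 i k j]; ring
    have hdg : ∀ j : Fin n,
        C i j j * (⟪x j, w⟫ * (if j = p then 1 else 0)
          - ⟪x j, w⟫ * (if j = p then 1 else 0)) = 0 := by
      intro j; ring
    have hp0 := tls17_pair_sym (fun j k => C i j k * (⟪x j, w⟫ * (if k = p then 1 else 0)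
          - ⟪x k, w⟫ * (if j = p then 1 else 0)))
      (fun j k => hsymg j k) (fun j => by simpa using hdg j)
    have hp : ∑ j, ∑ k, (C i j k * (⟪x j, w⟫ * (if k = p then 1 else 0)
          - ⟪x k, w⟫ * (if j = p then 1 else 0)))
        = 2 * ∑ q ∈ Finset.univ.filter (fun q : Fin n × Fin n => q.1 < q.2),
            (C i q.1 q.2 * (⟪x q.1, w⟫ * (if q.2 = p then 1 else 0)
              - ⟪x q.2, w⟫ * (if q.1 = p then 1 else 0))) := hp0
    have hful : ∑ j, ∑ k, (C i j k * (⟪x j, w⟫ * (if k = p then 1 else 0)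
          - ⟪x k, w⟫ * (if j = p then 1 else 0)))
        = 2 * ∑ m, C i m p * ⟪x m, w⟫ := by
      have inner1 : ∀ j, ∑ k, (C i j k * (⟪x j, w⟫ * (if k = p then 1 else 0)
          - ⟪x k, w⟫ * (if j = p then 1 else 0)))
          = C i j p * ⟪x j, w⟫ - (if j = p then ∑ k, C i j k * ⟪x k, w⟫ else 0) := by
        intro j
        have pt : ∀ k, (C i j k * (⟪x j, w⟫ * (if k = p then 1 else 0)
            - ⟪x k, w⟫ * (if j = p then 1 else 0)))
            = (if k = p then C i j k * ⟪x j, w⟫ else 0)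
              - (if j = p then C i j k * ⟪x k, w⟫ else 0) := by
          intro k
          by_cases h1 : k = p <;> by_cases h2 : j = p <;> simp [h1, h2] <;> ring
        rw [Finset.sum_congr rfl fun k _ => pt k, Finset.sum_sub_distrib]
        congr 1
        · simp [Finset.sum_ite_eq']
        · by_cases h : j = p <;> simp [h]
      rw [Finset.sum_congr rfl fun j _ => inner1 j, Finset.sum_sub_distrib]
      rw [Finset.sum_ite_eq' Finset.univ p (fun j => ∑ k, C i j k * ⟪x k, w⟫)]
      simp only [Finset.mem_univ, if_true]
      have : ∑ k, C i p k * ⟪x k, w⟫ = - ∑ k, C i k p * ⟪x k, w⟫ := by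
        rw [← Finset.sum_neg_distrib]
        exact Finset.sum_congr rfl fun k _ => by rw [hanti2 i p k]; ring
      rw [this]; ring
    linarith [hp, hful]
  have innerHy : ∀ (i : Fin n) (w : V) (p : Fin n),
      ⟪y p, H i w⟫ = ∑ m, C i m p * ⟪y m, w⟫ := by
    intro i w p
    rw [happly i w, inner_sum]
    have step : ∀ q : Fin n × Fin n,
        ⟪y p, C i q.1 q.2 • ((⟪x q.1, w⟫ • x q.2 - ⟪x q.2, w⟫ • x q.1)
          + (⟪y q.1, w⟫ • y q.2 - ⟪y q.2, w⟫ • y q.1))⟫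
        = C i q.1 q.2 * (⟪y q.1, w⟫ * (if q.2 = p then 1 else 0)
            - ⟪y q.2, w⟫ * (if q.1 = p then 1 else 0)) := by
      intro q
      rw [real_inner_smul_right]
      congr 1
      rw [inner_add_right, inner_sub_right, inner_sub_right,
        real_inner_smul_right, real_inner_smul_right,
        real_inner_smul_right, real_inner_smul_right,
        hyy, hyy, hyx, hyx]
      have e1 : (if p = q.2 then (1:ℝ) else 0) = (if q.2 = p then 1 else 0) := by
        by_cases h : p = q.2 <;> simp [h, eq_comm] at * <;> simp [*]
      have e2 : (if p = q.1 then (1:ℝ) else 0) = (if q.1 = p then 1 else 0) := by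
        by_cases h : p = q.1 <;> simp [h, eq_comm] at * <;> simp [*]
      rw [e1, e2]; ring
    rw [Finset.sum_congr rfl fun q _ => step q]
    have hsymg : ∀ j k : Fin n,
        C i j k * (⟪y j, w⟫ * (if k = p then 1 else 0)
          - ⟪y k, w⟫ * (if j = p then 1 else 0))
        = C i k j * (⟪y k, w⟫ * (if j = p then 1 else 0)
          - ⟪y j, w⟫ * (if k = p then 1 else 0)) := by
      intro j k; rw [hanti2 i k j]; ring
    have hdg : ∀ j : Fin n,
        C i j j * (⟪y j, w⟫ * (if j = p then 1 else 0)
          - ⟪y j, w⟫ * (if j = p then 1 else 0)) = 0 := by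
      intro j; ring
    have hp0 := tls17_pair_sym (fun j k => C i j k * (⟪y j, w⟫ * (if k = p then 1 else 0)
          - ⟪y k, w⟫ * (if j = p then 1 else 0)))
      (fun j k => hsymg j k) (fun j => by simpa using hdg j)
    have hp : ∑ j, ∑ k, (C i j k * (⟪y j, w⟫ * (if k = p then 1 else 0)
          - ⟪y k, w⟫ * (if j = p then 1 else 0)))
        = 2 * ∑ q ∈ Finset.univ.filter (fun q : Fin n × Fin n => q.1 < q.2),
            (C i q.1 q.2 * (⟪y q.1, w⟫ * (if q.2 = p then 1 else 0)
              - ⟪y q.2, w⟫ * (if q.1 = p then 1 else 0))) := hp0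
    have hful : ∑ j, ∑ k, (C i j k * (⟪y j, w⟫ * (if k = p then 1 else 0)
          - ⟪y k, w⟫ * (if j = p then 1 else 0)))
        = 2 * ∑ m, C i m p * ⟪y m, w⟫ := by
      have inner1 : ∀ j, ∑ k, (C i j k * (⟪y j, w⟫ * (if k = p then 1 else 0)
          - ⟪y k, w⟫ * (if j = p then 1 else 0)))
          = C i j p * ⟪y j, w⟫ - (if j = p then ∑ k, C i j k * ⟪y k, w⟫ else 0) := by
        intro j
        have pt : ∀ k, (C i j k * (⟪y j, w⟫ * (if k = p then 1 else 0)
            - ⟪y k, w⟫ * (if j = p then 1 else 0)))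
            = (if k = p then C i j k * ⟪y j, w⟫ else 0)
              - (if j = p then C i j k * ⟪y k, w⟫ else 0) := by
          intro k
          by_cases h1 : k = p <;> by_cases h2 : j = p <;> simp [h1, h2] <;> ring
        rw [Finset.sum_congr rfl fun k _ => pt k, Finset.sum_sub_distrib]
        congr 1
        · simp [Finset.sum_ite_eq']
        · by_cases h : j = p <;> simp [h]
      rw [Finset.sum_congr rfl fun j _ => inner1 j, Finset.sum_sub_distrib]
      rw [Finset.sum_ite_eq' Finset.univ p (fun j => ∑ k, C i j k * ⟪y k, w⟫)]
      simp only [Finset.mem_univ, if_true]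
      have : ∑ k, C i p k * ⟪y k, w⟫ = - ∑ k, C i k p * ⟪y k, w⟫ := by
        rw [← Finset.sum_neg_distrib]
        exact Finset.sum_congr rfl fun k _ => by rw [hanti2 i p k]; ring
      rw [this]; ring
    linarith [hp, hful]
  -- T in terms of Bform
  have hT' : ∀ X Y W : V, T X Y W =
      ∑ p ∈ Finset.univ.filter
        (fun p : Fin n × Fin n × Fin n => p.1 < p.2.1 ∧ p.2.1 < p.2.2),
        C p.1 p.2.1 p.2.2 * Bform x y a b p.1 p.2.1 p.2.2 X Y W := hT
  -- linearity of T
  have hTadd1 : ∀ X1 X2 Y W : V, T (X1 + X2) Y W = T X1 Y W + T X2 Y W := by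
    intro X1 X2 Y W
    rw [hT' X1 Y W, hT' X2 Y W, hT' (X1 + X2) Y W, ← Finset.sum_add_distrib]
    refine Finset.sum_congr rfl fun p _ => ?_
    simp only [Bform, triWedge_add1]; ring
  have hTsmul1 : ∀ (c : ℝ) (X Y W : V), T (c • X) Y W = c * T X Y W := by
    intro c X Y W
    rw [hT' X Y W, hT' (c • X) Y W, Finset.mul_sum]
    refine Finset.sum_congr rfl fun p _ => ?_
    simp only [Bform, triWedge_smul1]; ring
  have hTadd2 : ∀ (X Y1 Y2 W : V), T X (Y1 + Y2) W = T X Y1 W + T X Y2 W := by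
    intro X Y1 Y2 W
    rw [hT' X Y1 W, hT' X Y2 W, hT' X (Y1 + Y2) W, ← Finset.sum_add_distrib]
    refine Finset.sum_congr rfl fun p _ => ?_
    simp only [Bform, triWedge_add2]; ring
  have hTsmul2 : ∀ (c : ℝ) (X Y W : V), T X (c • Y) W = c * T X Y W := by
    intro c X Y W
    rw [hT' X Y W, hT' X (c • Y) W, Finset.mul_sum]
    refine Finset.sum_congr rfl fun p _ => ?_
    simp only [Bform, triWedge_smul2]; ring
  have hTadd3 : ∀ (X Y W1 W2 : V), T X Y (W1 + W2) = T X Y W1 + T X Y W2 := by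
    intro X Y W1 W2
    rw [hT' X Y W1, hT' X Y W2, hT' X Y (W1 + W2), ← Finset.sum_add_distrib]
    refine Finset.sum_congr rfl fun p _ => ?_
    simp only [Bform, triWedge_add3]; ring
  have hTsmul3 : ∀ (c : ℝ) (X Y W : V), T X Y (c • W) = c * T X Y W := by
    intro c X Y W
    rw [hT' X Y W, hT' X Y (c • W), Finset.mul_sum]
    refine Finset.sum_congr rfl fun p _ => ?_
    simp only [Bform, triWedge_smul3]; ring
  have hTzero1 : ∀ Y W : V, T 0 Y W = 0 := by
    intro Y W
    have := hTsmul1 0 0 Y W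
    simpa using this
  have hTzero2 : ∀ X W : V, T X 0 W = 0 := by
    intro X W
    have := hTsmul2 0 X 0 W
    simpa using this
  have hTzero3 : ∀ X Y : V, T X Y 0 = 0 := by
    intro X Y
    have := hTsmul3 0 X Y 0
    simpa using this
  -- KEY invariance under each H i
  have KEY : ∀ (i : Fin n) (X Y W : V),
      T (H i X) Y W + T X (H i Y) W + T X Y (H i W) = 0 := by
    intro i X Y W
    have conv : ∀ (U1 U2 U3 : V),
        ∑ p ∈ Finset.univ.filter
          (fun p : Fin n × Fin n × Fin n => p.1 < p.2.1 ∧ p.2.1 < p.2.2),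
          C p.1 p.2.1 p.2.2 * Bform x y a b p.1 p.2.1 p.2.2 U1 U2 U3
        = (1/6) * ∑ j, ∑ k, ∑ l, C j k l * Bform x y a b j k l U1 U2 U3 := by
      intro U1 U2 U3
      have h6 := tls17_six_sym (fun j k l => C j k l * Bform x y a b j k l U1 U2 U3)
        (fun j k l => by
          show C j k l * Bform x y a b j k l U1 U2 U3
            = C k j l * Bform x y a b k j l U1 U2 U3
          rw [Bform_swap12, hanti1 j k l]; ring)
        (fun j k l => by
          show C j k l * Bform x y a b j k l U1 U2 U3
            = C j l k * Bform x y a b j l k U1 U2 U3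
          rw [Bform_swap23, hanti2 j k l]; ring)
        (fun j l => by
          show C j j l * Bform x y a b j j l U1 U2 U3 = 0
          rw [hdiagC1]; ring)
        (fun j k => by
          show C j k k * Bform x y a b j k k U1 U2 U3 = 0
          rw [hdiagC2]; ring)
      have h6' : ∑ j, ∑ k, ∑ l, C j k l * Bform x y a b j k l U1 U2 U3
          = 6 * ∑ p ∈ Finset.univ.filter
            (fun p : Fin n × Fin n × Fin n => p.1 < p.2.1 ∧ p.2.1 < p.2.2),
            C p.1 p.2.1 p.2.2 * Bform x y a b p.1 p.2.1 p.2.2 U1 U2 U3 := h6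
      linarith
    rw [hT' (H i X) Y W, hT' X (H i Y) W, hT' X Y (H i W), conv, conv, conv]
    have merge : (∑ j, ∑ k, ∑ l, C j k l * Bform x y a b j k l (H i X) Y W)
        + (∑ j, ∑ k, ∑ l, C j k l * Bform x y a b j k l X (H i Y) W)
        + (∑ j, ∑ k, ∑ l, C j k l * Bform x y a b j k l X Y (H i W))
        = ∑ j, ∑ k, ∑ l, (C j k l * Bform x y a b j k l (H i X) Y W
          + C j k l * Bform x y a b j k l X (H i Y) W
          + C j k l * Bform x y a b j k l X Y (H i W)) := by
      simp only [Finset.sum_add_distrib]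
    have pw2 : ∀ j k l : Fin n,
        C j k l * Bform x y a b j k l (H i X) Y W
          + C j k l * Bform x y a b j k l X (H i Y) W
          + C j k l * Bform x y a b j k l X Y (H i W)
        = (a + 2 * b ^ 2 / a) * (C j k l *
            (Matrix.det !![∑ m, C i m j * ⟪x m, X⟫, ⟪x j, Y⟫, ⟪x j, W⟫;
                           ∑ m, C i m k * ⟪x m, X⟫, ⟪x k, Y⟫, ⟪x k, W⟫;
                           ∑ m, C i m l * ⟪x m, X⟫, ⟪x l, Y⟫, ⟪x l, W⟫]
             + Matrix.det !![⟪x j, X⟫, ∑ m, C i m j * ⟪x m, Y⟫, ⟪x j, W⟫;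
                             ⟪x k, X⟫, ∑ m, C i m k * ⟪x m, Y⟫, ⟪x k, W⟫;
                             ⟪x l, X⟫, ∑ m, C i m l * ⟪x m, Y⟫, ⟪x l, W⟫]
             + Matrix.det !![⟪x j, X⟫, ⟪x j, Y⟫, ∑ m, C i m j * ⟪x m, W⟫;
                             ⟪x k, X⟫, ⟪x k, Y⟫, ∑ m, C i m k * ⟪x m, W⟫;
                             ⟪x l, X⟫, ⟪x l, Y⟫, ∑ m, C i m l * ⟪x m, W⟫]))
          - 2 * b * (C j k l *
            (Matrix.det !![∑ m, C i m j * ⟪y m, X⟫, ⟪y j, Y⟫, ⟪y j, W⟫;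
                           ∑ m, C i m k * ⟪y m, X⟫, ⟪y k, Y⟫, ⟪y k, W⟫;
                           ∑ m, C i m l * ⟪y m, X⟫, ⟪y l, Y⟫, ⟪y l, W⟫]
             + Matrix.det !![⟪y j, X⟫, ∑ m, C i m j * ⟪y m, Y⟫, ⟪y j, W⟫;
                             ⟪y k, X⟫, ∑ m, C i m k * ⟪y m, Y⟫, ⟪y k, W⟫;
                             ⟪y l, X⟫, ∑ m, C i m l * ⟪y m, Y⟫, ⟪y l, W⟫]
             + Matrix.det !![⟪y j, X⟫, ⟪y j, Y⟫, ∑ m, C i m j * ⟪y m, W⟫;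
                             ⟪y k, X⟫, ⟪y k, Y⟫, ∑ m, C i m k * ⟪y m, W⟫;
                             ⟪y l, X⟫, ⟪y l, Y⟫, ∑ m, C i m l * ⟪y m, W⟫]))
          + b ^ 2 / a * ((C j k l *
            (Matrix.det !![∑ m, C i m j * ⟪x m, X⟫, ⟪x j, Y⟫, ⟪x j, W⟫;
                           ∑ m, C i m k * ⟪y m, X⟫, ⟪y k, Y⟫, ⟪y k, W⟫;
                           ∑ m, C i m l * ⟪y m, X⟫, ⟪y l, Y⟫, ⟪y l, W⟫]
             + Matrix.det !![⟪x j, X⟫, ∑ m, C i m j * ⟪x m, Y⟫, ⟪x j, W⟫;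
                             ⟪y k, X⟫, ∑ m, C i m k * ⟪y m, Y⟫, ⟪y k, W⟫;
                             ⟪y l, X⟫, ∑ m, C i m l * ⟪y m, Y⟫, ⟪y l, W⟫]
             + Matrix.det !![⟪x j, X⟫, ⟪x j, Y⟫, ∑ m, C i m j * ⟪x m, W⟫;
                             ⟪y k, X⟫, ⟪y k, Y⟫, ∑ m, C i m k * ⟪y m, W⟫;
                             ⟪y l, X⟫, ⟪y l, Y⟫, ∑ m, C i m l * ⟪y m, W⟫]))
            + (C j k l *
            (Matrix.det !![∑ m, C i m j * ⟪y m, X⟫, ⟪y j, Y⟫, ⟪y j, W⟫;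
                           ∑ m, C i m k * ⟪x m, X⟫, ⟪x k, Y⟫, ⟪x k, W⟫;
                           ∑ m, C i m l * ⟪y m, X⟫, ⟪y l, Y⟫, ⟪y l, W⟫]
             + Matrix.det !![⟪y j, X⟫, ∑ m, C i m j * ⟪y m, Y⟫, ⟪y j, W⟫;
                             ⟪x k, X⟫, ∑ m, C i m k * ⟪x m, Y⟫, ⟪x k, W⟫;
                             ⟪y l, X⟫, ∑ m, C i m l * ⟪y m, Y⟫, ⟪y l, W⟫]
             + Matrix.det !![⟪y j, X⟫, ⟪y j, Y⟫, ∑ m, C i m j * ⟪y m, W⟫;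
                             ⟪x k, X⟫, ⟪x k, Y⟫, ∑ m, C i m k * ⟪x m, W⟫;
                             ⟪y l, X⟫, ⟪y l, Y⟫, ∑ m, C i m l * ⟪y m, W⟫]))
            + (C j k l *
            (Matrix.det !![∑ m, C i m j * ⟪y m, X⟫, ⟪y j, Y⟫, ⟪y j, W⟫;
                           ∑ m, C i m k * ⟪y m, X⟫, ⟪y k, Y⟫, ⟪y k, W⟫;
                           ∑ m, C i m l * ⟪x m, X⟫, ⟪x l, Y⟫, ⟪x l, W⟫]
             + Matrix.det !![⟪y j, X⟫, ∑ m, C i m j * ⟪y m, Y⟫, ⟪y j, W⟫;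
                             ⟪y k, X⟫, ∑ m, C i m k * ⟪y m, Y⟫, ⟪y k, W⟫;
                             ⟪x l, X⟫, ∑ m, C i m l * ⟪x m, Y⟫, ⟪x l, W⟫]
             + Matrix.det !![⟪y j, X⟫, ⟪y j, Y⟫, ∑ m, C i m j * ⟪y m, W⟫;
                             ⟪y k, X⟫, ⟪y k, Y⟫, ∑ m, C i m k * ⟪y m, W⟫;
                             ⟪x l, X⟫, ⟪x l, Y⟫, ∑ m, C i m l * ⟪x m, W⟫]))) := by
      intro j k l
      simp only [Bform, triWedge]
      simp only [innerHx, innerHy]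
      simp [Matrix.det_fin_three]
      ring
    rw [show (1/6 : ℝ) * (∑ j, ∑ k, ∑ l, C j k l * Bform x y a b j k l (H i X) Y W)
        + (1/6) * (∑ j, ∑ k, ∑ l, C j k l * Bform x y a b j k l X (H i Y) W)
        + (1/6) * (∑ j, ∑ k, ∑ l, C j k l * Bform x y a b j k l X Y (H i W))
        = (1/6) * ((∑ j, ∑ k, ∑ l, C j k l * Bform x y a b j k l (H i X) Y W)
          + (∑ j, ∑ k, ∑ l, C j k l * Bform x y a b j k l X (H i Y) W)
          + (∑ j, ∑ k, ∑ l, C j k l * Bform x y a b j k l X Y (H i W))) by ring]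
    rw [merge]
    rw [Finset.sum_congr rfl fun j _ => Finset.sum_congr rfl fun k _ =>
      Finset.sum_congr rfl fun l _ => pw2 j k l]
    have z1 := tls17_det_inv C hanti1 hanti2 hjacobi i
      (fun m => ⟪x m, X⟫) (fun m => ⟪x m, X⟫) (fun m => ⟪x m, X⟫)
      (fun m => ⟪x m, Y⟫) (fun m => ⟪x m, Y⟫) (fun m => ⟪x m, Y⟫)
      (fun m => ⟪x m, W⟫) (fun m => ⟪x m, W⟫) (fun m => ⟪x m, W⟫)
    have z2 := tls17_det_inv C hanti1 hanti2 hjacobi i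
      (fun m => ⟪y m, X⟫) (fun m => ⟪y m, X⟫) (fun m => ⟪y m, X⟫)
      (fun m => ⟪y m, Y⟫) (fun m => ⟪y m, Y⟫) (fun m => ⟪y m, Y⟫)
      (fun m => ⟪y m, W⟫) (fun m => ⟪y m, W⟫) (fun m => ⟪y m, W⟫)
    have z3 := tls17_det_inv C hanti1 hanti2 hjacobi i
      (fun m => ⟪x m, X⟫) (fun m => ⟪y m, X⟫) (fun m => ⟪y m, X⟫)
      (fun m => ⟪x m, Y⟫) (fun m => ⟪y m, Y⟫) (fun m => ⟪y m, Y⟫)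
      (fun m => ⟪x m, W⟫) (fun m => ⟪y m, W⟫) (fun m => ⟪y m, W⟫)
    have z4 := tls17_det_inv C hanti1 hanti2 hjacobi i
      (fun m => ⟪y m, X⟫) (fun m => ⟪x m, X⟫) (fun m => ⟪y m, X⟫)
      (fun m => ⟪y m, Y⟫) (fun m => ⟪x m, Y⟫) (fun m => ⟪y m, Y⟫)
      (fun m => ⟪y m, W⟫) (fun m => ⟪x m, W⟫) (fun m => ⟪y m, W⟫)
    have z5 := tls17_det_inv C hanti1 hanti2 hjacobi i
      (fun m => ⟪y m, X⟫) (fun m => ⟪y m, X⟫) (fun m => ⟪x m, X⟫)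
      (fun m => ⟪y m, Y⟫) (fun m => ⟪y m, Y⟫) (fun m => ⟪x m, Y⟫)
      (fun m => ⟪y m, W⟫) (fun m => ⟪y m, W⟫) (fun m => ⟪x m, W⟫)
    simp only [Finset.sum_add_distrib, Finset.sum_sub_distrib, ← Finset.mul_sum]
    rw [z1, z2, z3, z4, z5]
    ring
  -- reduce Z to span generators
  intro Z X Y W
  have hZ : Z ∈ Submodule.span ℝ (Set.range x ∪ Set.range y) := by
    rw [hspan]; trivial
  have main : T ((Λ Z) X) Y W + T X ((Λ Z) Y) W + T X Y ((Λ Z) W) = 0 := by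
    induction hZ using Submodule.span_induction with
    | mem v hv =>
      rcases hv with hv | hv
      · obtain ⟨i, rfl⟩ := hv
        rw [hΛx i]
        have hsx : ∀ u : V, ((a + b ^ 2 / a) • H i) u = (a + b ^ 2 / a) • (H i u) :=
          fun u => rfl
        rw [hsx X, hsx Y, hsx W, hTsmul1, hTsmul2, hTsmul3]
        have := KEY i X Y W
        linear_combination (a + b ^ 2 / a) * this
      · obtain ⟨i, rfl⟩ := hv
        rw [hΛy i]
        show T ((0 : Module.End ℝ V) X) Y W + T X ((0 : Module.End ℝ V) Y) W
          + T X Y ((0 : Module.End ℝ V) W) = 0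
        rw [LinearMap.zero_apply, LinearMap.zero_apply, LinearMap.zero_apply,
          hTzero1, hTzero2, hTzero3]
        ring
    | zero =>
      rw [map_zero]
      show T ((0 : Module.End ℝ V) X) Y W + T X ((0 : Module.End ℝ V) Y) W
        + T X Y ((0 : Module.End ℝ V) W) = 0
      rw [LinearMap.zero_apply, LinearMap.zero_apply, LinearMap.zero_apply,
        hTzero1, hTzero2, hTzero3]
      ring
    | add u v hu hv hpu hpv =>
      rw [map_add]
      have hax : ∀ w : V, (Λ u + Λ v) w = Λ u w + Λ v w := fun w => rfl
      rw [hax X, hax Y, hax W, hTadd1, hTadd2, hTadd3]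
      linarith [hpu, hpv]
    | smul c u hu hpu =>
      rw [map_smul]
      have hax : ∀ w : V, (c • Λ u) w = c • (Λ u w) := fun w => rfl
      rw [hax X, hax Y, hax W, hTsmul1, hTsmul2, hTsmul3]
      linear_combination c * hpu
  linarith [main]
end
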